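/- (Phulara's Central Sets Theorem.) Let (S,+) be a commutative semigroup, let r be an idempotent in J(S), and let ⟨C_n⟩_{n=1}^∞ be a sequence of members of r with C_{n+1} ⊆ C_n for each n. Then there exist functions α : P_f(S^ℕ) → S and H : P_f(S^ℕ) → P_f(ℕ) such that: (1) if F, G ∈ P_f(S^ℕ) and F ⊊ G, then max H(F) < min H(G); and (2) whenever t ∈ ℕ, G_1 ⊊ G_2 ⊊ … ⊊ G_t are members of P_f(S^ℕ) with |G_1| = m, and f_i ∈ G_i for each i ∈ {1,…,t}, then Σ_{i=1}^{t} (α(G_i) + Σ_{s∈H(G_i)} f_i(s)) ∈ C_m. -/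

import Mathlib

open scoped Classical

namespace TotalSG

/-- the extension of `+` to `βS`: `A ∈ p+q ↔ {x : -x+A ∈ q} ∈ p`. -/
def uadd {S : Type} [Add S] (p q : Ultrafilter S) : Ultrafilter S :=
  p.bind fun x => q.map fun y => x + y

/-- a two-sided ideal of `(βS,+)`. -/
def IsIdeal {S : Type} [Add S] (I : Set (Ultrafilter S)) : Prop :=
  I.Nonempty ∧ (∀ p : Ultrafilter S, ∀ q ∈ I, uadd p q ∈ I) ∧
    (∀ q ∈ I, ∀ p : Ultrafilter S, uadd q p ∈ I)

/-- `K(βS)`, the smallest two-sided ideal of `βS` (= the intersection of all two-sided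
ideals). -/
def KSet (S : Type) [Add S] : Set (Ultrafilter S) := ⋂₀ {I | IsIdeal I}

/-- `C ⊆ S` is central: it belongs to some idempotent ultrafilter in `K(βS)`. -/
def IsCentral {S : Type} [Add S] (C : Set S) : Prop :=
  ∃ p : Ultrafilter S, uadd p p = p ∧ p ∈ KSet S ∧ C ∈ p

/-- addition on `Option S`, with `none` the formal empty sum. -/
def oadd {S : Type} [Add S] : Option S → Option S → Option S
  | none, y => y
  | some a, none => some a
  | some a, some b => some (a + b)

/-- sum of a list of (optional) terms; `none` iff there are no terms. -/
def osumO {S : Type} [Add S] (l : List (Option S)) : Option S := l.foldr oadd none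

/-- `Σ_{t ∈ H} f(t)` (in increasing order of indices); `none` iff `H = ∅`. -/
def osumF {S : Type} [Add S] (f : ℕ → S) (H : Finset ℕ) : Option S :=
  osumO ((H.sort (· ≤ ·)).map fun t => some (f t))

/-- `A ⊆ S` is a J-set: for every `F ∈ P_f(S^ℕ)` there are `a ∈ S` and `H ∈ P_f(ℕ)` with
`a + Σ_{t ∈ H} f(t) ∈ A` for every `f ∈ F`. -/
def IsJSet {S : Type} [Add S] (A : Set S) : Prop :=
  ∀ F : Finset (ℕ → S), F.Nonempty →
    ∃ (a : S) (H : Finset ℕ), H.Nonempty ∧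
      ∀ f ∈ F, ∃ x : S, osumF f H = some x ∧ a + x ∈ A

end TotalSG

/-!
Build `α F` and `H F` by recursion on `|F|`, carrying along the finite set of chain sums ending
at `F`, each tagged with `m = |G₁|`; the invariant is that a sum tagged `m` lies in `C_m^⋆`.
At stage `F` the set `C_{|F|}^⋆ ∩ ⋂ (-c + C_m^⋆)`, the intersection over the chain sums `(m, c)`
ending at proper subsets of `F`, is a member of `r` because `r` is idempotent, hence a J-set.
That J-set property, applied to `F`, supplies `α F` and `H F` with `H F` beyond all earlier
`H G`, and it keeps the invariant for the chain sums ending at `F`.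
-/

namespace TotalSG

section StarSet

variable {S : Type}

theorem mem_uadd [Add S] {p q : Ultrafilter S} {A : Set S} :
    A ∈ uadd p q ↔ {x | {y | x + y ∈ A} ∈ q} ∈ p :=
  Filter.mem_bind'

/-- The set `A^⋆ = {x ∈ A : -x + A ∈ r}` of Hindman–Strauss. -/
def starSet [Add S] (r : Ultrafilter S) (A : Set S) : Set S :=
  {x | x ∈ A ∧ {y | x + y ∈ A} ∈ r}

theorem starSet_subset [Add S] (r : Ultrafilter S) (A : Set S) : starSet r A ⊆ A :=
  fun _ hx => hx.1

theorem starSet_mem [Add S] {r : Ultrafilter S} (hr : uadd r r = r) {A : Set S} (hA : A ∈ r) :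
    starSet r A ∈ r :=
  Filter.inter_mem hA (mem_uadd.1 (by rwa [hr]))

theorem preimage_add_left_starSet_mem [AddSemigroup S] {r : Ultrafilter S} (hr : uadd r r = r)
    {A : Set S} {x : S} (hx : x ∈ starSet r A) : (x + ·) ⁻¹' starSet r A ∈ r := by
  refine Filter.mem_of_superset (starSet_mem hr hx.2) fun y hy => ⟨hy.1, ?_⟩
  simpa only [Set.mem_ofPred_eq, add_assoc] using hy.2

end StarSet

section OptionSum

variable {S : Type}

theorem oadd_assoc [AddSemigroup S] (a b c : Option S) :
    oadd (oadd a b) c = oadd a (oadd b c) := by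
  cases a <;> cases b <;> cases c <;> simp only [oadd, add_assoc]

theorem oadd_comm [AddCommMagma S] (a b : Option S) : oadd a b = oadd b a := by
  cases a <;> cases b <;> simp only [oadd, add_comm]

theorem osumO_cons [Add S] (x : Option S) (l : List (Option S)) :
    osumO (x :: l) = oadd x (osumO l) :=
  rfl

theorem osumO_append [AddSemigroup S] (l₁ l₂ : List (Option S)) :
    osumO (l₁ ++ l₂) = oadd (osumO l₁) (osumO l₂) := by
  induction l₁ with
  | nil => rfl
  | cons a l ih => rw [List.cons_append, osumO_cons, osumO_cons, ih, oadd_assoc]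

theorem osumO_singleton [Add S] (x : Option S) : osumO [x] = x := by
  cases x <;> rfl

theorem oadd_some_osumO_map_some [AddCommSemigroup S] (a : S) (l : List S) :
    oadd (some a) (osumO (l.map some)) = some (l.foldr (· + ·) a) := by
  induction l with
  | nil => rfl
  | cons x l ih =>
    rw [List.map_cons, osumO_cons, ← oadd_assoc, oadd_comm (some a), oadd_assoc, ih]
    rfl

/-- `a + Σ_{t ∈ H} f t`, which needs no neutral element. -/
def addSum [AddCommSemigroup S] (a : S) (f : ℕ → S) (H : Finset ℕ) : S :=
  H.fold (· + ·) a f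

theorem oadd_some_osumF [AddCommSemigroup S] (a : S) (f : ℕ → S) (H : Finset ℕ) :
    oadd (some a) (osumF f H) = some (addSum a f H) := by
  have hmap : (H.sort (· ≤ ·)).map (fun t => some (f t)) = ((H.sort (· ≤ ·)).map f).map some :=
    (List.map_map ..).symm
  rw [osumF, hmap, oadd_some_osumO_map_some, addSum, Finset.fold,
    ← Finset.sort_eq H (· ≤ ·), Multiset.map_coe, Multiset.coe_fold_r]

end OptionSum

theorem IsJSet.exists_gt {S : Type} [AddCommSemigroup S] {A : Set S} (hA : IsJSet A)
    {F : Finset (ℕ → S)} (hF : F.Nonempty) (k : ℕ) :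
    ∃ (a : S) (H : Finset ℕ), H.Nonempty ∧ (∀ x ∈ H, k < x) ∧
      ∀ f ∈ F, addSum a f H ∈ A := by
  let shift : ℕ → ℕ := (· + (k + 1))
  obtain ⟨a, H, hH, hmem⟩ := hA (F.image fun f => f ∘ shift) (hF.image _)
  have hgt : ∀ x ∈ H.image shift, k < x := by
    rintro _ hx
    obtain ⟨x, -, rfl⟩ := Finset.mem_image.1 hx
    exact Nat.lt_add_left x k.lt_succ_self
  refine ⟨a, H.image shift, hH.image _, hgt, fun f hf => ?_⟩
  obtain ⟨x, hx, hax⟩ := hmem _ (Finset.mem_image_of_mem _ hf)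
  have hsum := oadd_some_osumF a (f ∘ shift) H
  rw [hx] at hsum
  rwa [addSum, Finset.fold_image fun _ _ _ _ h => Nat.add_right_cancel h, ← addSum,
    ← Option.some.inj hsum]

section Construction

variable {S : Type} [AddCommSemigroup S] {r : Ultrafilter S} {C : ℕ → Set S}

def targetSet (r : Ultrafilter S) (C : ℕ → Set S) (n : ℕ) (D : Finset (ℕ × S)) : Set S :=
  starSet r (C n) ∩ ⋂ p ∈ D, (p.2 + ·) ⁻¹' starSet r (C p.1)

def IsAdmissible (r : Ultrafilter S) (C : ℕ → Set S) (F : Finset (ℕ → S)) (K : ℕ)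
    (D : Finset (ℕ × S)) (aH : S × Finset ℕ) : Prop :=
  aH.2.Nonempty ∧ (∀ x ∈ aH.2, K < x) ∧ ∀ f ∈ F, addSum aH.1 f aH.2 ∈ targetSet r C F.card D

noncomputable def cstStep (r : Ultrafilter S) (C : ℕ → Set S) (F : Finset (ℕ → S)) (K : ℕ)
    (D : Finset (ℕ × S)) : S × Finset ℕ :=
  haveI : Nonempty S := Filter.nonempty_of_neBot (r : Filter S)
  Classical.epsilon (IsAdmissible r C F K D)

/-- A chain sum `Σ_{i ≤ t} (α (G i) + Σ_{s ∈ H (G i)} f i s)` is stored as the pair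
`(|G₁|, sum)`, so that it remembers the set `C_{|G₁|}` it has to land in. -/
noncomputable def extendChainSums (F : Finset (ℕ → S)) (a : S) (H : Finset ℕ)
    (D : Finset (ℕ × S)) : Finset (ℕ × S) :=
  F.image (fun f => (F.card, addSum a f H)) ∪
    (D ×ˢ F).image fun q => (q.1.1, q.1.2 + addSum a q.2 H)

noncomputable def cstData (r : Ultrafilter S) (C : ℕ → Set S) (F : Finset (ℕ → S)) :
    S × Finset ℕ × Finset (ℕ × S) :=
  let K := F.ssubsets.attach.sup fun G => (cstData r C G).2.1.sup id
  let D := F.ssubsets.attach.sup fun G => (cstData r C G).2.2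
  let aH := cstStep r C F K D
  (aH.1, aH.2, extendChainSums F aH.1 aH.2 D)
termination_by F.card
decreasing_by all_goals exact Finset.card_lt_card (Finset.mem_ssubsets.1 G.2)

variable (r C) in
noncomputable def cstAlpha (F : Finset (ℕ → S)) : S := (cstData r C F).1

variable (r C) in
noncomputable def cstH (F : Finset (ℕ → S)) : Finset ℕ := (cstData r C F).2.1

variable (r C) in
noncomputable def chainSums (F : Finset (ℕ → S)) : Finset (ℕ × S) := (cstData r C F).2.2

variable (r C) in
noncomputable def cstBound (F : Finset (ℕ → S)) : ℕ :=
  F.ssubsets.attach.sup fun G => (cstH r C G).sup id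

variable (r C) in
noncomputable def chainSumsBelow (F : Finset (ℕ → S)) : Finset (ℕ × S) :=
  F.ssubsets.attach.sup fun G => chainSums r C G

variable (r C) in
theorem cstData_eq (F : Finset (ℕ → S)) :
    cstData r C F =
      let aH := cstStep r C F (cstBound r C F) (chainSumsBelow r C F)
      (aH.1, aH.2, extendChainSums F aH.1 aH.2 (chainSumsBelow r C F)) := by
  rw [cstData]; rfl

theorem chainSums_eq (F : Finset (ℕ → S)) :
    chainSums r C F = extendChainSums F (cstAlpha r C F) (cstH r C F) (chainSumsBelow r C F) := by
  simp only [chainSums, cstAlpha, cstH, cstData_eq]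

theorem mem_chainSumsBelow {F : Finset (ℕ → S)} {p : ℕ × S} :
    p ∈ chainSumsBelow r C F ↔ ∃ G ⊂ F, p ∈ chainSums r C G := by
  simp [chainSumsBelow, Finset.mem_sup, Finset.mem_ssubsets]

theorem le_cstBound {F G : Finset (ℕ → S)} (hGF : G ⊂ F) {x : ℕ} (hx : x ∈ cstH r C G) :
    x ≤ cstBound r C F :=
  (Finset.le_sup (f := id) hx).trans <|
    Finset.le_sup (f := fun G : F.ssubsets => (cstH r C G).sup id)
      (Finset.mem_attach _ ⟨G, Finset.mem_ssubsets.2 hGF⟩)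

theorem cstStep_spec (hr : uadd r r = r) (hrJ : ∀ A ∈ r, IsJSet A)
    (hC : ∀ n, 1 ≤ n → C n ∈ r) {F : Finset (ℕ → S)} (hF : F.Nonempty)
    (hbelow : ∀ p ∈ chainSumsBelow r C F, p.2 ∈ starSet r (C p.1)) :
    (cstH r C F).Nonempty ∧ (∀ x ∈ cstH r C F, cstBound r C F < x) ∧
      ∀ f ∈ F, addSum (cstAlpha r C F) f (cstH r C F) ∈
        targetSet r C F.card (chainSumsBelow r C F) := by
  have htarget : targetSet r C F.card (chainSumsBelow r C F) ∈ r :=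
    Filter.inter_mem (starSet_mem hr (hC _ (Finset.card_pos.2 hF)))
      ((Filter.biInter_mem (Finset.finite_toSet _)).2 fun p hp =>
        preimage_add_left_starSet_mem hr (hbelow p hp))
  obtain ⟨a, H, hH⟩ := (hrJ _ htarget).exists_gt hF (cstBound r C F)
  simp only [cstH, cstAlpha, cstData_eq, cstStep]
  exact Classical.epsilon_spec (p := IsAdmissible r C F _ _) ⟨(a, H), hH⟩

theorem mem_starSet_of_mem_chainSums (hr : uadd r r = r) (hrJ : ∀ A ∈ r, IsJSet A)
    (hC : ∀ n, 1 ≤ n → C n ∈ r) (F : Finset (ℕ → S)) :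
    ∀ p ∈ chainSums r C F, p.2 ∈ starSet r (C p.1) := by
  induction F using Finset.strongInduction with
  | H F ih =>
    have hbelow : ∀ p ∈ chainSumsBelow r C F, p.2 ∈ starSet r (C p.1) := fun p hp => by
      obtain ⟨G, hGF, hpG⟩ := mem_chainSumsBelow.1 hp
      exact ih G hGF p hpG
    intro p hp
    rw [chainSums_eq, extendChainSums, Finset.mem_union] at hp
    rcases hp with hp | hp
    · obtain ⟨f, hf, rfl⟩ := Finset.mem_image.1 hp
      exact ((cstStep_spec hr hrJ hC ⟨f, hf⟩ hbelow).2.2 f hf).1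
    · obtain ⟨⟨q, f⟩, hqf, rfl⟩ := Finset.mem_image.1 hp
      obtain ⟨hq, hf⟩ := Finset.mem_product.1 hqf
      exact Set.mem_iInter₂.1 ((cstStep_spec hr hrJ hC ⟨f, hf⟩ hbelow).2.2 f hf).2 q hq

theorem cstH_spec (hr : uadd r r = r) (hrJ : ∀ A ∈ r, IsJSet A)
    (hC : ∀ n, 1 ≤ n → C n ∈ r) {F : Finset (ℕ → S)} (hF : F.Nonempty) :
    (cstH r C F).Nonempty ∧ ∀ x ∈ cstH r C F, cstBound r C F < x :=
  (cstStep_spec hr hrJ hC hF fun p hp => by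
    obtain ⟨G, -, hpG⟩ := mem_chainSumsBelow.1 hp
    exact mem_starSet_of_mem_chainSums hr hrJ hC G p hpG).imp_right And.left

theorem exists_chainSum_mem_chainSums (t : ℕ) (G : Fin (t + 1) → Finset (ℕ → S))
    (hG : StrictMono G) (f : Fin (t + 1) → ℕ → S) (hf : ∀ i, f i ∈ G i) :
    ∃ c, osumO (List.ofFn fun i => some (addSum (cstAlpha r C (G i)) (f i) (cstH r C (G i)))) =
        some c ∧ ((G 0).card, c) ∈ chainSums r C (G (Fin.last t)) := by
  induction t with
  | zero =>
    refine ⟨_, rfl, ?_⟩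
    rw [chainSums_eq, extendChainSums]
    exact Finset.mem_union_left _ (Finset.mem_image_of_mem _ (hf 0))
  | succ t ih =>
    obtain ⟨c, hc, hmem⟩ := ih (G ∘ Fin.castSucc) (hG.comp Fin.strictMono_castSucc)
      (f ∘ Fin.castSucc) fun i => hf _
    let last := Fin.last (t + 1)
    refine ⟨c + addSum (cstAlpha r C (G last)) (f last) (cstH r C (G last)), ?_, ?_⟩
    · rw [List.ofFn_succ', List.concat_eq_append, osumO_append, osumO_singleton]
      exact congrArg (oadd · _) hc
    · rw [chainSums_eq, extendChainSums]
      refine Finset.mem_union_right _ (Finset.mem_image.2 ⟨(((G 0).card, c), f last),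
        Finset.mem_product.2 ⟨mem_chainSumsBelow.2 ⟨_, hG (Fin.castSucc_lt_last _), hmem⟩, hf _⟩,
        rfl⟩)

end Construction

end TotalSG

open TotalSG in
theorem phulara_CST_general {S : Type} [AddCommSemigroup S]
    (r : Ultrafilter S) (hridem : uadd r r = r) (hrJ : ∀ A ∈ r, IsJSet A)
    (C : ℕ → Set S) (hC : ∀ n, 1 ≤ n → C n ∈ r) :
    ∃ (α : Finset (ℕ → S) → S) (H : Finset (ℕ → S) → Finset ℕ),
      (∀ F : Finset (ℕ → S), F.Nonempty → (H F).Nonempty) ∧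
      (∀ F G : Finset (ℕ → S), F.Nonempty → F ⊂ G → ∀ x ∈ H F, ∀ y ∈ H G, x < y) ∧
      ∀ t : ℕ, ∀ ht : 0 < t, ∀ G : Fin t → Finset (ℕ → S),
        (∀ i, (G i).Nonempty) → (∀ i j : Fin t, i < j → G i ⊂ G j) →
        ∀ f : Fin t → ℕ → S, (∀ i, f i ∈ G i) →
        ∃ c ∈ C ((G ⟨0, ht⟩).card),
          osumO (List.ofFn fun i : Fin t =>
            oadd (some (α (G i))) (osumF (f i) (H (G i)))) = some c := by
  refine ⟨cstAlpha r C, cstH r C, fun F hF => (cstH_spec hridem hrJ hC hF).1, ?_, ?_⟩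
  · intro F G hF hFG x hx y hy
    exact (le_cstBound hFG hx).trans_lt
      ((cstH_spec hridem hrJ hC (hF.mono hFG.subset)).2 y hy)
  · rintro (_ | t) ht G - hG f hf
    · exact absurd ht (lt_irrefl 0)
    obtain ⟨c, hsum, hmem⟩ := exists_chainSum_mem_chainSums t G hG f hf
    refine ⟨c, starSet_subset r _ (mem_starSet_of_mem_chainSums hridem hrJ hC _ _ hmem), ?_⟩
    simpa only [oadd_some_osumF] using hsum

open TotalSG in
/-- Phulara's Central Sets Theorem for commutative semigroups: a decreasing sequence
`⟨C_n⟩` of members of an idempotent `r ∈ J(S)`, with the conclusion landing in `C_m`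
where `m = |G_1|`. -/
theorem phulara_CST {S : Type} [AddCommSemigroup S]
    (r : Ultrafilter S) (hridem : uadd r r = r) (hrJ : ∀ A ∈ r, IsJSet A)
    (C : ℕ → Set S) (hC : ∀ n, 1 ≤ n → C n ∈ r)
    (hCdec : ∀ n, 1 ≤ n → C (n + 1) ⊆ C n) :
    ∃ (α : Finset (ℕ → S) → S) (H : Finset (ℕ → S) → Finset ℕ),
      (∀ F : Finset (ℕ → S), F.Nonempty → (H F).Nonempty) ∧
      (∀ F G : Finset (ℕ → S), F.Nonempty → F ⊂ G → ∀ x ∈ H F, ∀ y ∈ H G, x < y) ∧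
      ∀ t : ℕ, ∀ ht : 0 < t, ∀ G : Fin t → Finset (ℕ → S),
        (∀ i, (G i).Nonempty) → (∀ i j : Fin t, i < j → G i ⊂ G j) →
        ∀ f : Fin t → ℕ → S, (∀ i, f i ∈ G i) →
        ∃ c ∈ C ((G ⟨0, ht⟩).card),
          osumO (List.ofFn fun i : Fin t =>
            oadd (some (α (G i))) (osumF (f i) (H (G i)))) = some c :=
  phulara_CST_general r hridem hrJ C hC
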